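/- arXiv:1507.02419 — 7 statements merged into one kernel-verified Lean document; each statement's English description precedes it below -/
import Mathlib

section
/- If λ is a nonzero root of a monic polynomial with integer coefficients all of whose complex roots lie in the closed unit disc, then |λ| = 1. -/
open Polynomial

theorem kronecker_abs_eq_one (f : Polynomial ℤ) (hf : f.Monic)
    (hroots : ∀ z ∈ f.aroots ℂ, ‖z‖ ≤ 1)
    (lam : ℂ) (hlam : lam ∈ f.aroots ℂ) (hne : lam ≠ 0) :
    ‖lam‖ = 1 := by
  have hf0 : f ≠ 0 := hf.ne_zero
  obtain ⟨g, hfg, hgnd⟩ := f.exists_eq_pow_rootMultiplicity_mul_and_not_dvd hf0 0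
  set k := f.rootMultiplicity 0 with hk
  rw [map_zero, sub_zero] at hfg hgnd
  have hXk : (X ^ k : ℤ[X]).Monic := monic_X_pow k
  have hg : g.Monic := by
    have h := hf; rw [hfg] at h
    exact hXk.of_mul_monic_left h
  have hg0 : g.eval 0 ≠ 0 := fun h => hgnd (by simpa using dvd_iff_isRoot.2 h)
  set G : ℂ[X] := g.map (Int.castRingHom ℂ) with hG
  have hGm : G.Monic := hg.map _
  have hGsplits : G.Splits := IsAlgClosed.splits G
  have hmapf : f.map (Int.castRingHom ℂ) = X ^ k * G := by
    rw [hfg]; simp [hG]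
  have hfeval : (f.map (Int.castRingHom ℂ)).eval lam = 0 := by
    rw [mem_aroots] at hlam
    simpa [eval_map, aeval_def] using hlam.2
  have hGeval : G.eval lam = 0 := by
    rw [hmapf] at hfeval
    simp only [eval_mul, eval_pow, eval_X] at hfeval
    rcases mul_eq_zero.1 hfeval with h | h
    · exact absurd (pow_eq_zero_iff'.mp h).1 hne
    · exact h
  have hlamG : lam ∈ G.roots := mem_roots'.2 ⟨hGm.ne_zero, hGeval⟩
  have hsub : ∀ z ∈ G.roots, ‖z‖₊ ≤ 1 := by
    intro z hz
    have : z ∈ f.aroots ℂ := by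
      rw [aroots_def, algebraMap_int_eq, hmapf, roots_mul (by rw [← hmapf]; exact (hf.map _).ne_zero)]
      exact Multiset.mem_add.2 (Or.inr hz)
    have := hroots z this
    rw [← NNReal.coe_le_coe]
    simpa using this
  have hcoeff : G.coeff 0 = (-1) ^ G.natDegree * G.roots.prod :=
    hGsplits.coeff_zero_eq_prod_roots_of_monic hGm
  -- 1 ≤ ‖G.coeff 0‖₊
  have hge1 : (1 : NNReal) ≤ ‖G.coeff 0‖₊ := by
    have hc : G.coeff 0 = ((g.coeff 0 : ℤ) : ℂ) := by simp [hG]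
    have hne0 : g.coeff 0 ≠ 0 := by rwa [← coeff_zero_eq_eval_zero] at hg0
    have h1 : (1 : ℝ) ≤ |((g.coeff 0 : ℤ) : ℝ)| := by
      have := Int.one_le_abs hne0
      rw [← Int.cast_abs]
      exact_mod_cast this
    rw [← NNReal.coe_le_coe]
    rw [hc]
    simpa [Complex.norm_intCast, Int.norm_eq_abs] using h1
  -- ‖prod‖ = prod of norms
  have hprod : ‖G.roots.prod‖₊ = (G.roots.map (fun z => ‖z‖₊)).prod := by
    induction G.roots using Multiset.induction with
    | empty => simp
    | cons a s ih => simp [nnnorm_mul, ih]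
  have hge1' : (1 : NNReal) ≤ (G.roots.map (fun z => ‖z‖₊)).prod := by
    calc (1 : NNReal) ≤ ‖G.coeff 0‖₊ := hge1
    _ = (G.roots.map (fun z => ‖z‖₊)).prod := by
        rw [hcoeff, nnnorm_mul, nnnorm_pow, nnnorm_neg, nnnorm_one, one_pow, one_mul, hprod]
  -- split off lam
  have hcons : G.roots = lam ::ₘ G.roots.erase lam := (Multiset.cons_erase hlamG).symm
  have hrest : ((G.roots.erase lam).map (fun z => ‖z‖₊)).prod ≤ 1 := by
    have := Multiset.prod_le_pow_card ((G.roots.erase lam).map (fun z => ‖z‖₊)) 1 ?_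
    · simpa using this
    · intro x hx
      obtain ⟨z, hz, rfl⟩ := Multiset.mem_map.1 hx
      exact hsub z (Multiset.mem_of_mem_erase hz)
  have h1le : (1 : NNReal) ≤ ‖lam‖₊ := by
    rw [hcons] at hge1'
    simp only [Multiset.map_cons, Multiset.prod_cons] at hge1'
    calc (1 : NNReal) ≤ ‖lam‖₊ * ((G.roots.erase lam).map (fun z => ‖z‖₊)).prod := hge1'
    _ ≤ ‖lam‖₊ * 1 := by exact mul_le_mul_right hrest _
    _ = ‖lam‖₊ := mul_one _
  have hle1 : ‖lam‖₊ ≤ 1 := hsub lam hlamG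
  have : ‖lam‖₊ = 1 := le_antisymm hle1 h1le
  have : ‖lam‖ = 1 := by rw [← coe_nnnorm, this]; simp
  simpa using this
end

section
/- If λ is a nonzero root of a monic polynomial with integer coefficients all of whose complex roots lie in the closed unit disc, then λ is a root of unity. -/
open Polynomial

/-- A multiset of reals all in `[0,1]` has product at most 1. -/
lemma multiset_prod_le_one {s : Multiset ℝ} (h : ∀ a ∈ s, 0 ≤ a ∧ a ≤ 1) : s.prod ≤ 1 := by
  induction s using Multiset.induction with
  | empty => simp
  | cons a s ih =>
    rw [Multiset.prod_cons]
    have ha := h a (Multiset.mem_cons_self a s)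
    have hs : ∀ b ∈ s, 0 ≤ b ∧ b ≤ 1 := fun b hb => h b (Multiset.mem_cons_of_mem hb)
    have h0 : 0 ≤ s.prod := Multiset.prod_nonneg fun b hb => (hs b hb).1
    calc a * s.prod ≤ 1 * 1 := mul_le_mul ha.2 (ih hs) h0 zero_le_one
    _ = 1 := one_mul 1

theorem kronecker_root_of_unity (f : Polynomial ℤ) (hf : f.Monic)
    (hroots : ∀ z ∈ f.aroots ℂ, ‖z‖ ≤ 1)
    (lam : ℂ) (hlam : lam ∈ f.aroots ℂ) (hne : lam ≠ 0) :
    ∃ m : ℕ, 0 < m ∧ lam ^ m = 1 := by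
  have hfC : f.map (algebraMap ℤ ℂ) ≠ 0 := (hf.map _).ne_zero
  have haev : (Polynomial.aeval lam) f = 0 := by
    rw [aroots, mem_roots hfC] at hlam
    rw [Polynomial.aeval_def, ← Polynomial.eval_map]
    exact hlam
  have hint : IsIntegral ℤ lam := ⟨f, hf, haev⟩
  -- the ℤ-minimal polynomial of lam divides f
  set p : Polynomial ℤ := minpoly ℤ lam with hp
  have hpmonic : p.Monic := minpoly.monic hint
  have hpdvd : p ∣ f := minpoly.isIntegrallyClosed_dvd hint haev
  -- all roots of p in ℂ have abs ≤ 1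
  have hproots : ∀ z ∈ (p.map (algebraMap ℤ ℂ)).roots, ‖z‖ ≤ 1 := by
    intro z hz
    apply hroots
    rw [aroots]
    exact Multiset.mem_of_le (Polynomial.roots.le_of_dvd hfC (Polynomial.map_dvd _ hpdvd)) hz
  -- all roots of p in ℂ have abs = 1
  have hkey : ∀ z ∈ (p.map (algebraMap ℤ ℂ)).roots, ‖z‖ = 1 := by
    have halg' : IsIntegral ℚ lam := hint.tower_top
    have hminl' : minpoly ℚ lam = p.map (Int.castRingHom ℚ) :=
      minpoly.isIntegrallyClosed_eq_field_fractions' ℚ hint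
    have hc0 : p.coeff 0 ≠ 0 := by
      have h1 : (minpoly ℚ lam).coeff 0 ≠ 0 := minpoly.coeff_zero_ne_zero halg' hne
      rw [hminl', Polynomial.coeff_map] at h1
      intro h
      apply h1
      rw [h, map_zero]
    have habs : (1 : ℝ) ≤ ‖(p.map (algebraMap ℤ ℂ)).coeff 0‖ := by
      rw [Polynomial.coeff_map]
      have heq : ((algebraMap ℤ ℂ) (p.coeff 0)) = ((p.coeff 0 : ℤ) : ℂ) := rfl
      rw [heq, Complex.norm_intCast]
      exact_mod_cast Int.one_le_abs hc0
    have hsplit := (IsAlgClosed.splits _).eq_prod_roots_of_monic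
      (hpmonic.map (algebraMap ℤ ℂ))
    have hprod : ‖(p.map (algebraMap ℤ ℂ)).coeff 0‖
        = (((p.map (algebraMap ℤ ℂ)).roots).map (fun z => ‖z‖)).prod := by
      conv_lhs => rw [Polynomial.coeff_zero_eq_eval_zero, hsplit]
      rw [Polynomial.eval_multiset_prod, Multiset.map_map,
        ← (show ∀ a : ℂ, (normHom a : ℝ) = ‖a‖ from fun _ => rfl), map_multiset_prod,
        Multiset.map_map]
      apply congrArg
      apply Multiset.map_congr rfl
      intro z hz
      simp
    intro z hz
    by_contra hzne
    have hzlt : ‖z‖ < 1 := lt_of_le_of_ne (hproots z hz) hzne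
    have : (((p.map (algebraMap ℤ ℂ)).roots).map (fun z => ‖z‖)).prod < 1 := by
      have hmem : ‖z‖ ∈ ((p.map (algebraMap ℤ ℂ)).roots).map
          (fun z => ‖z‖) := Multiset.mem_map_of_mem _ hz
      obtain ⟨t, ht⟩ := Multiset.exists_cons_of_mem hmem
      rw [ht, Multiset.prod_cons]
      have htle : t.prod ≤ 1 := by
        apply multiset_prod_le_one
        intro a ha
        have : a ∈ ((p.map (algebraMap ℤ ℂ)).roots).map (fun z => ‖z‖) := by
          rw [ht]; exact Multiset.mem_cons_of_mem ha
        obtain ⟨w, hw, rfl⟩ := Multiset.mem_map.mp this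
        exact ⟨norm_nonneg _, hproots w hw⟩
      have ht0 : 0 ≤ t.prod := Multiset.prod_nonneg (by
        intro a ha
        have : a ∈ ((p.map (algebraMap ℤ ℂ)).roots).map (fun z => ‖z‖) := by
          rw [ht]; exact Multiset.mem_cons_of_mem ha
        obtain ⟨w, hw, rfl⟩ := Multiset.mem_map.mp this
        exact norm_nonneg _)
      calc ‖z‖ * t.prod ≤ ‖z‖ * 1 :=
            mul_le_mul_of_nonneg_left htle (norm_nonneg _)
        _ = ‖z‖ := mul_one _
        _ < 1 := hzlt
    rw [← hprod] at this
    linarith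
  -- set up the number field K = ℚ(lam)
  have halg : IsIntegral ℚ lam := hint.tower_top
  let K := IntermediateField.adjoin ℚ {lam}
  haveI : FiniteDimensional ℚ K := IntermediateField.adjoin.finiteDimensional halg
  haveI : NumberField K := ⟨⟩
  let x : K := IntermediateField.AdjoinSimple.gen ℚ lam
  have hxint : IsIntegral ℤ x := by
    rw [← isIntegral_algebraMap_iff (algebraMap K ℂ).injective]
    exact hint
  have hmin : minpoly ℚ (algebraMap K ℂ x) = minpoly ℚ x :=
    minpoly.algebraMap_eq (algebraMap K ℂ).injective x
  have hxval : (algebraMap K ℂ) x = lam := rfl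
  have hnorm : ∀ φ : K →+* ℂ, ‖φ x‖ = 1 := by
    intro φ
    have hroot : (Polynomial.aeval (φ x)) (minpoly ℚ x) = 0 := by
      have h2 : φ.toRatAlgHom ((Polynomial.aeval x) (minpoly ℚ x)) = 0 := by
        rw [minpoly.aeval, map_zero]
      rw [← Polynomial.aeval_algHom_apply] at h2
      exact h2

    -- φ x is a root of minpoly ℚ lam in ℂ, hence of p mapped to ℂ
    have hminl : minpoly ℚ lam = (minpoly ℤ lam).map (Int.castRingHom ℚ) :=
      minpoly.isIntegrallyClosed_eq_field_fractions' ℚ hint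
    have hminx : minpoly ℚ x = minpoly ℚ lam := by rw [← hmin, hxval]
    have hrootp : φ x ∈ (p.map (algebraMap ℤ ℂ)).roots := by
      rw [mem_roots ((hpmonic.map (algebraMap ℤ ℂ)).ne_zero)]
      have h3 : (Polynomial.aeval (φ x)) (minpoly ℚ lam) = 0 := by rw [← hminx]; exact hroot
      rw [hminl] at h3
      rw [Polynomial.aeval_def, Polynomial.eval₂_eq_eval_map, Polynomial.map_map] at h3
      have hcomp : (algebraMap ℚ ℂ).comp (Int.castRingHom ℚ) = algebraMap ℤ ℂ := by
        ext n; simp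
      rw [hcomp] at h3
      exact h3
    have := hkey _ hrootp
    exact this
  obtain ⟨n, hn, hxn⟩ := NumberField.Embeddings.pow_eq_one_of_norm_eq_one K ℂ hxint hnorm
  refine ⟨n, hn, ?_⟩
  have : (algebraMap K ℂ) (x ^ n) = (algebraMap K ℂ) 1 := by rw [hxn]
  rw [map_pow, hxval, map_one] at this
  exact this
end

section
/- Every monic polynomial f ∈ ℤ[x] with all complex roots in the closed unit disc factors as f(x) = x^k · ∏_j Φ_{n_j}(x), a power of x times a product of cyclotomic polynomials. -/
open Polynomial

lemma aux_prod_le_one (s : Multiset ℝ) (h0 : ∀ x ∈ s, 0 ≤ x) (h1 : ∀ x ∈ s, x ≤ 1) :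
    0 ≤ s.prod ∧ s.prod ≤ 1 := by
  induction s using Multiset.induction with
  | empty => simp
  | cons a t ih =>
    obtain ⟨ht0, ht1⟩ := ih (fun x hx => h0 x (Multiset.mem_cons_of_mem hx))
      (fun x hx => h1 x (Multiset.mem_cons_of_mem hx))
    have ha0 := h0 a (Multiset.mem_cons_self a t)
    have ha1 := h1 a (Multiset.mem_cons_self a t)
    rw [Multiset.prod_cons]
    constructor
    · exact mul_nonneg ha0 ht0
    · calc a * t.prod ≤ 1 * 1 := mul_le_mul ha1 ht1 ht0 zero_le_one
        _ = 1 := by ring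

lemma aux_all_eq_one (s : Multiset ℝ) (h0 : ∀ x ∈ s, 0 ≤ x) (h1 : ∀ x ∈ s, x ≤ 1)
    (hp : 1 ≤ s.prod) : ∀ x ∈ s, x = 1 := by
  induction s using Multiset.induction with
  | empty => simp
  | cons a t ih =>
    have h0' : ∀ x ∈ t, 0 ≤ x := fun x hx => h0 x (Multiset.mem_cons_of_mem hx)
    have h1' : ∀ x ∈ t, x ≤ 1 := fun x hx => h1 x (Multiset.mem_cons_of_mem hx)
    obtain ⟨ht0, ht1⟩ := aux_prod_le_one t h0' h1'
    have ha0 := h0 a (Multiset.mem_cons_self a t)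
    have ha1 := h1 a (Multiset.mem_cons_self a t)
    rw [Multiset.prod_cons] at hp
    have ha : a = 1 := by nlinarith
    intro x hx
    rcases Multiset.mem_cons.1 hx with rfl | hx
    · exact ha
    · exact ih h0' h1' (by nlinarith) x hx

lemma key_root_of_unity (z : ℂ) (hzi : IsIntegral ℤ z) (hz0 : z ≠ 0)
    (h : ∀ w ∈ (minpoly ℤ z).aroots ℂ, ‖w‖ ≤ 1) :
    ∃ n : ℕ, 0 < n ∧ z ^ n = 1 := by
  set p : Polynomial ℤ := minpoly ℤ z with hp
  have hpm : p.Monic := minpoly.monic hzi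
  have hq : minpoly ℚ z = p.map (algebraMap ℤ ℚ) :=
    minpoly.isIntegrallyClosed_eq_field_fractions' ℚ hzi
  -- Step A: all roots of p over ℂ have absolute value exactly 1
  have habs1 : ∀ w ∈ (minpoly ℤ z).aroots ℂ, ‖w‖ = 1 := by
    set q : Polynomial ℂ := p.map (algebraMap ℤ ℂ) with hqdef
    have hqm : q.Monic := hpm.map _
    have hsplit : q.Splits := IsAlgClosed.splits q
    have hprod : q = (q.roots.map fun a => X - C a).prod :=
      hsplit.eq_prod_roots_of_monic hqm
    have heval : q.eval 0 = (q.roots.map fun a => -a).prod := by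
      conv_lhs => rw [hprod]
      rw [eval_multiset_prod, Multiset.map_map]
      congr 1
      apply Multiset.map_congr rfl
      intro a _
      simp
    have hmapeq : (q.roots.map fun a => -a).map (fun w : ℂ => ‖w‖) = q.roots.map (fun w : ℂ => ‖w‖) := by
      rw [Multiset.map_map]
      apply Multiset.map_congr rfl
      intro a _
      simp
    have habs : ‖q.eval 0‖ = (q.roots.map (fun w : ℂ => ‖w‖)).prod := by
      rw [heval, ← hmapeq]
      exact map_multiset_prod (normHom (α := ℂ)) _
    have hc0 : p.coeff 0 ≠ 0 := by
      intro hc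
      have h1 : (minpoly ℚ z).coeff 0 ≠ 0 :=
        minpoly.coeff_zero_ne_zero (hzi.tower_top (A := ℚ)) hz0
      apply h1
      rw [hq, coeff_map, hc, map_zero]
    have hval : q.eval 0 = ((p.coeff 0 : ℤ) : ℂ) := by
      rw [hqdef, eval_map, eval₂_at_zero]
      simp
    have hge : (1 : ℝ) ≤ ‖q.eval 0‖ := by
      rw [hval, Complex.norm_intCast]
      exact_mod_cast Int.one_le_abs hc0
    rw [habs] at hge
    have hmem : ∀ x ∈ q.roots.map (fun w : ℂ => ‖w‖), 0 ≤ x ∧ x ≤ 1 := by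
      intro x hx
      simp only [Multiset.mem_map] at hx
      obtain ⟨b, hb, rfl⟩ := hx
      exact ⟨norm_nonneg _, h b hb⟩
    have hall := aux_all_eq_one _ (fun x hx => (hmem x hx).1) (fun x hx => (hmem x hx).2) hge
    intro w hw
    exact hall _ (Multiset.mem_map.2 ⟨w, hw, rfl⟩)
  -- Step B: number field machinery
  have hzalg : IsIntegral ℚ z := hzi.tower_top
  let K := IntermediateField.adjoin ℚ ({z} : Set ℂ)
  haveI : FiniteDimensional ℚ K := IntermediateField.adjoin.finiteDimensional hzalg
  haveI : NumberField K := ⟨⟩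
  set x : K := IntermediateField.AdjoinSimple.gen ℚ z with hx
  have hxz : algebraMap K ℂ x = z := IntermediateField.AdjoinSimple.algebraMap_gen ℚ z
  have hxi : IsIntegral ℤ x := by
    have h1 : IsIntegral ℤ (algebraMap K ℂ x) := by rw [hxz]; exact hzi
    exact (isIntegral_algebraMap_iff (algebraMap K ℂ).injective).mp h1
  have hnorm : ∀ φ : K →+* ℂ, ‖φ x‖ = 1 := by
    intro φ
    have hmini : minpoly ℚ x = minpoly ℚ z := IntermediateField.minpoly_gen ℚ z
    have haev : aeval (φ.toRatAlgHom x) (minpoly ℚ x) = 0 := by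
      rw [aeval_algHom_apply, minpoly.aeval, map_zero]
    have hmem : φ x ∈ (minpoly ℤ z).aroots ℂ := by
      rw [mem_roots ((hpm.map (algebraMap ℤ ℂ)).ne_zero), IsRoot.def, eval_map, ← aeval_def]
      have h2 : aeval (φ x) (minpoly ℤ z) =
          aeval (φ x) ((minpoly ℤ z).map (algebraMap ℤ ℚ)) := by
        rw [aeval_map_algebraMap]
      rw [h2, ← hq, ← hmini]
      exact haev
    have := habs1 _ hmem
    exact this
  obtain ⟨n, hn, hxn⟩ := NumberField.Embeddings.pow_eq_one_of_norm_eq_one K ℂ hxi hnorm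
  refine ⟨n, hn, ?_⟩
  have := congrArg (algebraMap K ℂ) hxn
  rwa [map_pow, hxz, map_one] at this

theorem kronecker_eq_pow_mul_cyclotomic (f : Polynomial ℤ) (hf : f.Monic)
    (hroots : ∀ z ∈ f.aroots ℂ, ‖z‖ ≤ 1) :
    ∃ (k : ℕ) (s : Multiset ℕ), (∀ m ∈ s, 0 < m) ∧
      f = X ^ k * (s.map (fun m => cyclotomic m ℤ)).prod := by
  have key : ∀ n (f : Polynomial ℤ), f.natDegree = n → f.Monic →
      (∀ z ∈ f.aroots ℂ, ‖z‖ ≤ 1) →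
      ∃ (k : ℕ) (s : Multiset ℕ), (∀ m ∈ s, 0 < m) ∧
        f = X ^ k * (s.map (fun m => cyclotomic m ℤ)).prod := by
    intro n
    induction n using Nat.strong_induction_on with
    | _ n ih =>
      intro f hdeg hf hroots
      rcases Nat.eq_zero_or_pos n with rfl | hn
      · refine ⟨0, 0, by simp, ?_⟩
        rw [hf.natDegree_eq_zero] at hdeg
        simp [hdeg]
      · -- f has positive degree, find a root over ℂ
        have hfm : (f.map (algebraMap ℤ ℂ)).Monic := hf.map _
        have hfne : f.map (algebraMap ℤ ℂ) ≠ 0 := hfm.ne_zero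
        have hdegpos : 0 < (f.map (algebraMap ℤ ℂ)).degree := by
          rw [natDegree_pos_iff_degree_pos.symm, hf.natDegree_map, hdeg]
          exact hn
        obtain ⟨z, hz⟩ := Complex.exists_root hdegpos
        have hzroot : z ∈ f.aroots ℂ := (mem_roots hfne).2 hz
        by_cases hz0 : z = 0
        · -- X divides f
          subst hz0
          have hXdvd : X ∣ f := by
            have h1 := hz
            rw [IsRoot.def, eval_map, eval₂_at_zero] at h1
            rw [X_dvd_iff]
            simpa using h1
          obtain ⟨g, hg⟩ := hXdvd
          have hgm : g.Monic := Monic.of_mul_monic_left monic_X (by rwa [← hg])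
          have hgne : g ≠ 0 := hgm.ne_zero
          have hdg : g.natDegree < n := by
            have : n = 1 + g.natDegree := by
              rw [← hdeg, hg, natDegree_mul X_ne_zero hgne, natDegree_X]
            omega
          have hgroots : ∀ w ∈ g.aroots ℂ, ‖w‖ ≤ 1 := by
            intro w hw
            apply hroots
            exact Multiset.mem_of_le
              (roots.le_of_dvd hfne (Polynomial.map_dvd _ ⟨X, by rw [hg]; ring⟩)) hw
          obtain ⟨k, s, hs, hfact⟩ := ih g.natDegree hdg g rfl hgm hgroots
          exact ⟨k + 1, s, hs, by rw [hg, hfact]; ring⟩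
        · -- z ≠ 0: minimal polynomial is cyclotomic
          have hzi : IsIntegral ℤ z := ⟨f, hf, by rw [eval₂_eq_eval_map]; exact hz⟩
          have hpdvd : minpoly ℤ z ∣ f := minpoly.isIntegrallyClosed_dvd hzi
            (by rw [aeval_def, eval₂_eq_eval_map]; exact hz)
          have hpm : (minpoly ℤ z).Monic := minpoly.monic hzi
          have hproots : ∀ w ∈ (minpoly ℤ z).aroots ℂ, ‖w‖ ≤ 1 := by
            intro w hw
            apply hroots
            exact Multiset.mem_of_le
              (roots.le_of_dvd hfne (Polynomial.map_dvd _ hpdvd)) hw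
          obtain ⟨m, hm, hzm⟩ := key_root_of_unity z hzi hz0 hproots
          have hfin : IsOfFinOrder z := isOfFinOrder_iff_pow_eq_one.2 ⟨m, hm, hzm⟩
          have hprim : IsPrimitiveRoot z (orderOf z) := IsPrimitiveRoot.orderOf z
          have hopos : 0 < orderOf z := hfin.orderOf_pos
          have hcyc : cyclotomic (orderOf z) ℤ = minpoly ℤ z :=
            cyclotomic_eq_minpoly hprim hopos
          obtain ⟨g, hg⟩ := hpdvd
          have hgm : g.Monic := Monic.of_mul_monic_left hpm (by rwa [← hg])
          have hgne : g ≠ 0 := hgm.ne_zero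
          have hppos : 0 < (minpoly ℤ z).natDegree := minpoly.natDegree_pos hzi
          have hdg : g.natDegree < n := by
            have : n = (minpoly ℤ z).natDegree + g.natDegree := by
              rw [← hdeg, hg, natDegree_mul hpm.ne_zero hgne]
            omega
          have hgroots : ∀ w ∈ g.aroots ℂ, ‖w‖ ≤ 1 := by
            intro w hw
            apply hroots
            exact Multiset.mem_of_le
              (roots.le_of_dvd hfne (Polynomial.map_dvd _ ⟨minpoly ℤ z, by rw [hg]; ring⟩)) hw
          obtain ⟨k, s, hs, hfact⟩ := ih g.natDegree hdg g rfl hgm hgroots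
          refine ⟨k, orderOf z ::ₘ s, ?_, ?_⟩
          · intro m' hm'
            rcases Multiset.mem_cons.1 hm' with rfl | hm'
            · exact hopos
            · exact hs m' hm'
          · rw [hg, hfact, Multiset.map_cons, Multiset.prod_cons, hcyc]
            ring
  exact key _ f rfl hf hroots
end

section
/- There are exactly 19 monic polynomials of degree 3 in ℤ[x] with all complex roots in the closed unit disc. -/
open Polynomial


noncomputable def P (t : ℤ × ℤ × ℤ) : Polynomial ℤ :=
  X^3 + C t.1 * X^2 + C t.2.1 * X + C t.2.2

lemma P_monic (t : ℤ × ℤ × ℤ) : (P t).Monic := by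
  apply Polynomial.monic_of_natDegree_le_of_coeff_eq_one 3
  · unfold P; compute_degree
  · simp only [P, coeff_add, coeff_C_mul, coeff_X_pow, coeff_C]; norm_num [coeff_X]

lemma P_deg (t : ℤ × ℤ × ℤ) : (P t).natDegree = 3 := by
  unfold P
  compute_degree!

lemma P_coeff2 (t : ℤ × ℤ × ℤ) : (P t).coeff 2 = t.1 := by
  simp only [P, coeff_add, coeff_C_mul, coeff_X_pow, coeff_C]; norm_num [coeff_X, coeff_one]

lemma P_coeff1 (t : ℤ × ℤ × ℤ) : (P t).coeff 1 = t.2.1 := by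
  simp only [P, coeff_add, coeff_C_mul, coeff_X_pow, coeff_C]; norm_num [coeff_X, coeff_one]

lemma P_coeff0 (t : ℤ × ℤ × ℤ) : (P t).coeff 0 = t.2.2 := by
  simp only [P, coeff_add, coeff_C_mul, coeff_X_pow, coeff_C]; norm_num [coeff_X, coeff_one]

lemma P_inj : Function.Injective P := by
  intro s t h
  have h2 := congrArg (fun p => Polynomial.coeff p 2) h
  have h1 := congrArg (fun p => Polynomial.coeff p 1) h
  have h0 := congrArg (fun p => Polynomial.coeff p 0) h
  simp only [P_coeff2, P_coeff1, P_coeff0] at h2 h1 h0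
  exact Prod.ext h2 (Prod.ext h1 h0)

lemma mem_aroots_P {t : ℤ × ℤ × ℤ} {z : ℂ} (hz : z ∈ (P t).aroots ℂ) :
    z^3 + t.1*z^2 + t.2.1*z + t.2.2 = 0 := by
  rw [mem_aroots] at hz
  have := hz.2
  simp [P, map_add, map_mul, map_pow] at this
  linear_combination this


def L : Finset (ℤ × ℤ × ℤ) :=
  {(-1,-1,1),(0,0,1),(1,1,1),(2,2,1),(3,3,1),
   (-3,3,-1),(-2,2,-1),(-1,1,-1),(0,0,-1),(1,-1,-1),
   (-2,1,0),(-1,1,0),(0,1,0),(1,1,0),(2,1,0),(0,-1,0),(-1,0,0),(0,0,0),(1,0,0)}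

lemma cube1 {z : ℂ} (h : z^3 = 1 ∨ z^3 = -1) : ‖z‖ ≤ 1 := by
  have h3 : (‖z‖)^3 = 1 := by
    rcases h with h | h <;> rw [← norm_pow, h] <;> simp
  nlinarith [norm_nonneg z, sq_nonneg (‖z‖ - 1), sq_nonneg (‖z‖ + 1)]

lemma quad1 {z : ℂ} (h : z^2 + z + 1 = 0) : ‖z‖ ≤ 1 :=
  cube1 (Or.inl (by linear_combination (z-1)*h))

lemma quad2 {z : ℂ} (h : z^2 - z + 1 = 0) : ‖z‖ ≤ 1 :=
  cube1 (Or.inr (by linear_combination (z+1)*h))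

lemma quad3 {z : ℂ} (h : z^2 + 1 = 0) : ‖z‖ ≤ 1 := by
  have h2 : (‖z‖)^2 = 1 := by
    have hz : z^2 = -1 := by linear_combination h
    rw [← norm_pow, hz]; simp
  nlinarith [norm_nonneg z]

lemma lin1 {z : ℂ} (h : z - 1 = 0) : ‖z‖ ≤ 1 := by
  have : z = 1 := by linear_combination h
  simp [this]

lemma lin2 {z : ℂ} (h : z + 1 = 0) : ‖z‖ ≤ 1 := by
  have : z = -1 := by linear_combination h
  simp [this]

lemma lin0 {z : ℂ} (h : z = 0) : ‖z‖ ≤ 1 := by simp [h]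

lemma forward : ∀ t ∈ L, ∀ z ∈ (P t).aroots ℂ, ‖z‖ ≤ 1 := by
  intro t ht z hz
  have h := mem_aroots_P hz
  fin_cases ht <;> push_cast at h
  · -- (-1,-1,1) : (x-1)^2(x+1)
    rcases mul_eq_zero.1 (show (z-1)*((z-1)*(z+1)) = 0 by linear_combination h) with h1 | h1
    · exact lin1 h1
    · rcases mul_eq_zero.1 h1 with h2 | h2
      · exact lin1 h2
      · exact lin2 h2
  · -- (0,0,1) : (x+1)(x^2-x+1)
    rcases mul_eq_zero.1 (show (z+1)*(z^2-z+1) = 0 by linear_combination h) with h1 | h1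
    · exact lin2 h1
    · exact quad2 h1
  · -- (1,1,1) : (x+1)(x^2+1)
    rcases mul_eq_zero.1 (show (z+1)*(z^2+1) = 0 by linear_combination h) with h1 | h1
    · exact lin2 h1
    · exact quad3 h1
  · -- (2,2,1) : (x+1)(x^2+x+1)
    rcases mul_eq_zero.1 (show (z+1)*(z^2+z+1) = 0 by linear_combination h) with h1 | h1
    · exact lin2 h1
    · exact quad1 h1
  · -- (3,3,1) : (x+1)^3
    rcases mul_eq_zero.1 (show (z+1)*((z+1)*(z+1)) = 0 by linear_combination h) with h1 | h1
    · exact lin2 h1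
    · rcases mul_eq_zero.1 h1 with h2 | h2
      · exact lin2 h2
      · exact lin2 h2
  · -- (-3,3,-1) : (x-1)^3
    rcases mul_eq_zero.1 (show (z-1)*((z-1)*(z-1)) = 0 by linear_combination h) with h1 | h1
    · exact lin1 h1
    · rcases mul_eq_zero.1 h1 with h2 | h2
      · exact lin1 h2
      · exact lin1 h2
  · -- (-2,2,-1) : (x-1)(x^2-x+1)
    rcases mul_eq_zero.1 (show (z-1)*(z^2-z+1) = 0 by linear_combination h) with h1 | h1
    · exact lin1 h1
    · exact quad2 h1
  · -- (-1,1,-1) : (x-1)(x^2+1)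
    rcases mul_eq_zero.1 (show (z-1)*(z^2+1) = 0 by linear_combination h) with h1 | h1
    · exact lin1 h1
    · exact quad3 h1
  · -- (0,0,-1) : (x-1)(x^2+x+1)
    rcases mul_eq_zero.1 (show (z-1)*(z^2+z+1) = 0 by linear_combination h) with h1 | h1
    · exact lin1 h1
    · exact quad1 h1
  · -- (1,-1,-1) : (x+1)^2(x-1)
    rcases mul_eq_zero.1 (show (z+1)*((z+1)*(z-1)) = 0 by linear_combination h) with h1 | h1
    · exact lin2 h1
    · rcases mul_eq_zero.1 h1 with h2 | h2
      · exact lin2 h2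
      · exact lin1 h2
  · -- (-2,1,0) : x(x-1)^2
    rcases mul_eq_zero.1 (show z*((z-1)*(z-1)) = 0 by linear_combination h) with h1 | h1
    · exact lin0 h1
    · rcases mul_eq_zero.1 h1 with h2 | h2
      · exact lin1 h2
      · exact lin1 h2
  · -- (-1,1,0) : x(x^2-x+1)
    rcases mul_eq_zero.1 (show z*(z^2-z+1) = 0 by linear_combination h) with h1 | h1
    · exact lin0 h1
    · exact quad2 h1
  · -- (0,1,0) : x(x^2+1)
    rcases mul_eq_zero.1 (show z*(z^2+1) = 0 by linear_combination h) with h1 | h1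
    · exact lin0 h1
    · exact quad3 h1
  · -- (1,1,0) : x(x^2+x+1)
    rcases mul_eq_zero.1 (show z*(z^2+z+1) = 0 by linear_combination h) with h1 | h1
    · exact lin0 h1
    · exact quad1 h1
  · -- (2,1,0) : x(x+1)^2
    rcases mul_eq_zero.1 (show z*((z+1)*(z+1)) = 0 by linear_combination h) with h1 | h1
    · exact lin0 h1
    · rcases mul_eq_zero.1 h1 with h2 | h2
      · exact lin2 h2
      · exact lin2 h2
  · -- (0,-1,0) : x(x-1)(x+1)
    rcases mul_eq_zero.1 (show z*((z-1)*(z+1)) = 0 by linear_combination h) with h1 | h1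
    · exact lin0 h1
    · rcases mul_eq_zero.1 h1 with h2 | h2
      · exact lin1 h2
      · exact lin2 h2
  · -- (-1,0,0) : x^2(x-1)
    rcases mul_eq_zero.1 (show z*(z*(z-1)) = 0 by linear_combination h) with h1 | h1
    · exact lin0 h1
    · rcases mul_eq_zero.1 h1 with h2 | h2
      · exact lin0 h2
      · exact lin1 h2
  · -- (0,0,0) : x^3
    rcases mul_eq_zero.1 (show z*(z*z) = 0 by linear_combination h) with h1 | h1
    · exact lin0 h1
    · rcases mul_eq_zero.1 h1 with h2 | h2
      · exact lin0 h2
      · exact lin0 h2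
  · -- (1,0,0) : x^2(x+1)
    rcases mul_eq_zero.1 (show z*(z*(z+1)) = 0 by linear_combination h) with h1 | h1
    · exact lin0 h1
    · rcases mul_eq_zero.1 h1 with h2 | h2
      · exact lin0 h2
      · exact lin2 h2

lemma f_eq {f : Polynomial ℤ} (hm : f.Monic) (hd : f.natDegree = 3) :
    f = P (f.coeff 2, f.coeff 1, f.coeff 0) := by
  have h4 : f.natDegree < 4 := by omega
  have hs := Polynomial.as_sum_range' f 4 h4
  have h3 : f.coeff 3 = 1 := by rw [← hd]; exact hm
  conv_lhs => rw [hs]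
  simp only [Finset.sum_range_succ, ← Polynomial.C_mul_X_pow_eq_monomial, h3, Polynomial.C_1, Finset.range_one,
    Finset.sum_singleton]
  unfold P
  ring

lemma roots_structure {f : Polynomial ℤ} (hm : f.Monic) (hd : f.natDegree = 3) :
    ∃ z₁ z₂ z₃ : ℂ, (f.aroots ℂ) = {z₁, z₂, z₃} ∧
      f.map (algebraMap ℤ ℂ) = (X - C z₁) * ((X - C z₂) * ((X - C z₃) * 1)) := by
  set g := f.map (algebraMap ℤ ℂ) with hg
  have hgm : g.Monic := hm.map _
  have hgd : g.natDegree = 3 := by rw [hg, f.natDegree_map_eq_of_injective (algebraMap ℤ ℂ).injective_int, hd]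
  have hsplit : g.Splits := IsAlgClosed.splits g
  have hcard : g.roots.card = 3 := by
    rw [(Polynomial.splits_iff_card_roots).mp hsplit, hgd]
  obtain ⟨z₁, z₂, z₃, hz⟩ := Multiset.card_eq_three.mp hcard
  refine ⟨z₁, z₂, z₃, ?_, ?_⟩
  · exact hz
  · have := hsplit.eq_prod_roots_of_monic hgm
    rw [hz] at this
    simpa [Multiset.map_cons, Multiset.prod_cons, mul_assoc] using this

-- AM-GM style exclusion
lemma cube_exclude {a : ℤ} {x₁ x₂ x₃ : ℝ} (h1 : |x₁| ≤ 1) (h2 : |x₂| ≤ 1) (h3 : |x₃| ≤ 1)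
    (hsum : x₁ + x₂ + x₃ = -(a:ℝ))
    (heq : ((2+2*a : ℤ):ℝ) * ((2+2*a : ℤ):ℝ) = (2-2*x₁)*((2-2*x₂)*(2-2*x₃))) : -1 ≤ a := by
  by_contra hlt
  push_neg at hlt
  have ha' : a ≤ -2 := by omega
  have ha : (a:ℝ) ≤ -2 := by exact_mod_cast ha'
  rw [abs_le] at h1 h2 h3
  have e1 : (0:ℝ) ≤ 1 - x₁ := by linarith
  have e2 : (0:ℝ) ≤ 1 - x₂ := by linarith
  have e3 : (0:ℝ) ≤ 1 - x₃ := by linarith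
  have hs : (1-x₁) + (1-x₂) + (1-x₃) ≤ 1 := by
    have : (3:ℝ) - (x₁+x₂+x₃) = 3 + (a:ℝ) := by rw [hsum]; ring
    linarith
  have key : ((2+2*a : ℤ):ℝ) * ((2+2*a : ℤ):ℝ) ≥ 4 := by
    push_cast
    nlinarith
  push_cast at key heq
  nlinarith [mul_nonneg e1 e2, mul_nonneg (mul_nonneg e1 e2) e3, sq_nonneg ((1-x₁)-(1-x₂))]

lemma abs_one_of_prod {x y : ℝ} (hx : x ≤ 1) (hy : y ≤ 1) (hx0 : 0 ≤ x) (hy0 : 0 ≤ y)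
    (h : 1 ≤ x * y) : x = 1 ∧ y = 1 := by
  constructor <;> nlinarith

lemma conj_eq_of_abs_one {z : ℂ} (h : ‖z‖ = 1) :
    z * (starRingEnd ℂ) z = 1 := by
  rw [Complex.mul_conj]
  norm_cast
  rw [← Complex.sq_norm, h]; norm_num

lemma LC0 {a b : ℤ} {z w : ℂ} (hA : (a:ℂ) = -(z+w)) (hB : (b:ℂ) = z*w)
    (hz : ‖z‖ ≤ 1) (hw : ‖w‖ ≤ 1) : (a, b, (0:ℤ)) ∈ L := by
  have hb1 : |b| ≤ 1 := by
    have : ‖(b:ℂ)‖ ≤ 1 := by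
      rw [hB, norm_mul]
      calc ‖z‖ * ‖w‖ ≤ 1 * 1 :=
        mul_le_mul hz hw (norm_nonneg w) zero_le_one
      _ = 1 := by norm_num
    rw [Complex.norm_intCast] at this
    exact_mod_cast this
  have ha3 : |a| ≤ 2 := by
    have : ‖(a:ℂ)‖ ≤ 2 := by
      rw [hA, norm_neg]
      calc ‖z + w‖ ≤ ‖z‖ + ‖w‖ := norm_add_le z w
      _ ≤ 2 := by linarith
    rw [Complex.norm_intCast] at this
    exact_mod_cast this
  obtain ⟨hbl, hbu⟩ := abs_le.mp hb1
  obtain ⟨hal, hau⟩ := abs_le.mp ha3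
  interval_cases b
  · -- b = -1 : z*w = -1, |z| = |w| = 1, a = 0
    have hzw : z * w = -1 := by rw [← hB]; norm_num
    have habs : ‖z‖ = 1 ∧ ‖w‖ = 1 := by
      apply abs_one_of_prod hz hw (norm_nonneg z) (norm_nonneg w)
      have : ‖z*w‖ = 1 := by rw [hzw]; simp
      rw [norm_mul] at this; linarith
    have uz := conj_eq_of_abs_one habs.1
    have uw := conj_eq_of_abs_one habs.2
    have hzne : z ≠ 0 := by
      intro h0; rw [h0] at habs; simp at habs
    have hcz : (starRingEnd ℂ) z = -w := by
      have : z * ((starRingEnd ℂ) z + w) = 0 := by linear_combination uz + hzw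
      rcases mul_eq_zero.1 this with h0 | h0
      · exact absurd h0 hzne
      · linear_combination h0
    have hcw : (starRingEnd ℂ) w = -z := by
      have hwne : w ≠ 0 := by intro h0; rw [h0] at habs; simp at habs
      have : w * ((starRingEnd ℂ) w + z) = 0 := by linear_combination uw + hzw
      rcases mul_eq_zero.1 this with h0 | h0
      · exact absurd h0 hwne
      · linear_combination h0
    have hconj : (a:ℂ) = z + w := by
      have := congrArg (starRingEnd ℂ) hA
      simpa [hcz, hcw] using this
    have ha0 : (a:ℂ) = 0 := by linear_combination (hconj + hA)/2
    have : a = 0 := by exact_mod_cast ha0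
    subst this; decide
  · -- b = 0 : z*w = 0
    have hzw : z * w = 0 := by rw [← hB]; norm_num
    have ha1 : |a| ≤ 1 := by
      have : ‖(a:ℂ)‖ ≤ 1 := by
        rcases mul_eq_zero.1 hzw with h0 | h0 <;> rw [hA, norm_neg, h0] <;> simpa
      rw [Complex.norm_intCast] at this
      exact_mod_cast this
    obtain ⟨hal1, hau1⟩ := abs_le.mp ha1
    interval_cases a <;> decide
  · -- b = 1 : a ∈ [-2,2]
    interval_cases a <;> decide

lemma normSq_one_sub {z : ℂ} (h : ‖z‖ = 1) :
    Complex.normSq (1 - z) = 2 - 2*z.re := by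
  have hn : Complex.normSq z = 1 := by rw [Complex.normSq_eq_norm_sq, h]; norm_num
  rw [Complex.normSq_apply] at hn ⊢
  simp only [Complex.sub_re, Complex.sub_im, Complex.one_re, Complex.one_im]
  ring_nf
  nlinarith [hn]

lemma normSq_neg_one_sub {z : ℂ} (h : ‖z‖ = 1) :
    Complex.normSq (-1 - z) = 2 + 2*z.re := by
  have hn : Complex.normSq z = 1 := by rw [Complex.normSq_eq_norm_sq, h]; norm_num
  rw [Complex.normSq_apply] at hn ⊢
  simp only [Complex.sub_re, Complex.sub_im, Complex.neg_re, Complex.neg_im, Complex.one_re,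
    Complex.one_im]
  ring_nf
  nlinarith [hn]


lemma abs_all_one {z₁ z₂ z₃ : ℂ} (h1 : ‖z₁‖ ≤ 1) (h2 : ‖z₂‖ ≤ 1)
    (h3 : ‖z₃‖ ≤ 1) (hp : ‖z₁ * z₂ * z₃‖ = 1) :
    ‖z₁‖ = 1 ∧ ‖z₂‖ = 1 ∧ ‖z₃‖ = 1 := by
  rw [norm_mul, norm_mul] at hp
  have n1 := norm_nonneg z₁
  have n2 := norm_nonneg z₂
  have n3 := norm_nonneg z₃
  have h12 : ‖z₁‖ * ‖z₂‖ ≤ 1 := by nlinarith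
  have e12 : ‖z₁‖ * ‖z₂‖ = 1 ∧ ‖z₃‖ = 1 :=
    abs_one_of_prod h12 h3 (by positivity) n3 (by nlinarith)
  have e1 := abs_one_of_prod h1 h2 n1 n2 (by nlinarith [e12.1])
  exact ⟨e1.1, e1.2, e12.2⟩

lemma sum_re {a : ℤ} {z₁ z₂ z₃ : ℂ} (hA : ((a:ℤ):ℂ) = -(z₁+z₂+z₃)) :
    z₁.re + z₂.re + z₃.re = -(a:ℝ) := by
  have h := congrArg Complex.re hA
  simp only [Complex.intCast_re, Complex.neg_re, Complex.add_re] at h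
  linarith

lemma abs_a_le_three {a : ℤ} {z₁ z₂ z₃ : ℂ} (h1 : ‖z₁‖ ≤ 1) (h2 : ‖z₂‖ ≤ 1)
    (h3 : ‖z₃‖ ≤ 1) (hA : ((a:ℤ):ℂ) = -(z₁+z₂+z₃)) : |a| ≤ 3 := by
  have : ‖((a:ℤ):ℂ)‖ ≤ 3 := by
    rw [hA, norm_neg]
    calc ‖z₁ + z₂ + z₃‖ ≤ ‖z₁ + z₂‖ + ‖z₃‖ :=
          norm_add_le _ _
      _ ≤ ‖z₁‖ + ‖z₂‖ + ‖z₃‖ := by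
          linarith [norm_add_le z₁ z₂]
      _ ≤ 3 := by linarith
  rw [Complex.norm_intCast] at this
  exact_mod_cast this

lemma case_one {a b : ℤ} {z₁ z₂ z₃ : ℂ} (h1 : ‖z₁‖ ≤ 1) (h2 : ‖z₂‖ ≤ 1)
    (h3 : ‖z₃‖ ≤ 1) (hA : ((a:ℤ):ℂ) = -(z₁+z₂+z₃))
    (hB : ((b:ℤ):ℂ) = z₁*z₂+z₁*z₃+z₂*z₃) (hC : z₁*z₂*z₃ = -1)
    (hE : (2:ℂ) + (a:ℂ) + (b:ℂ) = (1-z₁)*((1-z₂)*((1-z₃)*1))) : (a, b, (1:ℤ)) ∈ L := by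
  have hall : ‖z₁‖ = 1 ∧ ‖z₂‖ = 1 ∧ ‖z₃‖ = 1 :=
    abs_all_one h1 h2 h3 (by rw [hC]; simp)
  obtain ⟨a1, a2, a3⟩ := hall
  have u₁ := conj_eq_of_abs_one a1
  have u₂ := conj_eq_of_abs_one a2
  have u₃ := conj_eq_of_abs_one a3
  have hcA : ((a:ℤ):ℂ) = -((starRingEnd ℂ) z₁ + (starRingEnd ℂ) z₂ + (starRingEnd ℂ) z₃) := by
    have := congrArg (starRingEnd ℂ) hA
    simpa using this
  have hba : ((b:ℤ):ℂ) = ((a:ℤ):ℂ) := by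
    rw [hB, hcA]
    linear_combination ((starRingEnd ℂ) z₁ + (starRingEnd ℂ) z₂ + (starRingEnd ℂ) z₃) * hC
      - z₂*z₃*u₁ - z₁*z₃*u₂ - z₁*z₂*u₃
  have hb : b = a := by exact_mod_cast hba
  have hE2 : (((2+2*a : ℤ)):ℂ) = (1-z₁)*((1-z₂)*((1-z₃)*1)) := by
    push_cast
    linear_combination hE - hba
  have hn := congrArg Complex.normSq hE2
  rw [map_mul, map_mul, map_mul, map_one, mul_one, Complex.normSq_intCast,
    normSq_one_sub a1, normSq_one_sub a2, normSq_one_sub a3] at hn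
  have hx1 : |z₁.re| ≤ 1 := by rw [← a1]; exact Complex.abs_re_le_norm z₁
  have hx2 : |z₂.re| ≤ 1 := by rw [← a2]; exact Complex.abs_re_le_norm z₂
  have hx3 : |z₃.re| ≤ 1 := by rw [← a3]; exact Complex.abs_re_le_norm z₃
  have hlow : -1 ≤ a := cube_exclude hx1 hx2 hx3 (sum_re hA) hn
  have hup := (abs_le.mp (abs_a_le_three h1 h2 h3 hA)).2
  rw [hb]
  interval_cases a <;> decide

lemma case_neg_one {a b : ℤ} {z₁ z₂ z₃ : ℂ} (h1 : ‖z₁‖ ≤ 1) (h2 : ‖z₂‖ ≤ 1)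
    (h3 : ‖z₃‖ ≤ 1) (hA : ((a:ℤ):ℂ) = -(z₁+z₂+z₃))
    (hB : ((b:ℤ):ℂ) = z₁*z₂+z₁*z₃+z₂*z₃) (hC : z₁*z₂*z₃ = 1)
    (hE : (-2:ℂ) + (a:ℂ) - (b:ℂ) = (-1-z₁)*((-1-z₂)*((-1-z₃)*1))) : (a, b, (-1:ℤ)) ∈ L := by
  have hall : ‖z₁‖ = 1 ∧ ‖z₂‖ = 1 ∧ ‖z₃‖ = 1 :=
    abs_all_one h1 h2 h3 (by rw [hC]; simp)
  obtain ⟨a1, a2, a3⟩ := hall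
  have u₁ := conj_eq_of_abs_one a1
  have u₂ := conj_eq_of_abs_one a2
  have u₃ := conj_eq_of_abs_one a3
  have hcA : ((a:ℤ):ℂ) = -((starRingEnd ℂ) z₁ + (starRingEnd ℂ) z₂ + (starRingEnd ℂ) z₃) := by
    have := congrArg (starRingEnd ℂ) hA
    simpa using this
  have hba : ((b:ℤ):ℂ) = -((a:ℤ):ℂ) := by
    rw [hB, hcA]
    linear_combination ((starRingEnd ℂ) z₁ + (starRingEnd ℂ) z₂ + (starRingEnd ℂ) z₃) * hC
      - z₂*z₃*u₁ - z₁*z₃*u₂ - z₁*z₂*u₃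
  have hb : b = -a := by exact_mod_cast hba
  have hE2 : (((-2+2*a : ℤ)):ℂ) = (-1-z₁)*((-1-z₂)*((-1-z₃)*1)) := by
    push_cast
    linear_combination hE + hba
  have hn := congrArg Complex.normSq hE2
  rw [map_mul, map_mul, map_mul, map_one, mul_one, Complex.normSq_intCast,
    normSq_neg_one_sub a1, normSq_neg_one_sub a2, normSq_neg_one_sub a3] at hn
  have hx1 : |(-z₁.re)| ≤ 1 := by rw [abs_neg, ← a1]; exact Complex.abs_re_le_norm z₁
  have hx2 : |(-z₂.re)| ≤ 1 := by rw [abs_neg, ← a2]; exact Complex.abs_re_le_norm z₂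
  have hx3 : |(-z₃.re)| ≤ 1 := by rw [abs_neg, ← a3]; exact Complex.abs_re_le_norm z₃
  have hsum' : (-z₁.re) + (-z₂.re) + (-z₃.re) = -(((-a:ℤ)):ℝ) := by
    have := sum_re hA
    push_cast
    push_cast at this
    linarith
  have heq : ((2+2*(-a) : ℤ):ℝ) * ((2+2*(-a) : ℤ):ℝ)
      = (2-2*(-z₁.re))*((2-2*(-z₂.re))*(2-2*(-z₃.re))) := by
    push_cast
    push_cast at hn
    linear_combination hn
  have hlow : -1 ≤ -a := cube_exclude hx1 hx2 hx3 hsum' heq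
  have hup : a ≤ 1 := by omega
  have hlow' := (abs_le.mp (abs_a_le_three h1 h2 h3 hA)).1
  rw [hb]
  interval_cases a <;> decide

lemma backward {f : Polynomial ℤ} (hm : f.Monic) (hd : f.natDegree = 3)
    (hroots : ∀ z ∈ f.aroots ℂ, ‖z‖ ≤ 1) :
    (f.coeff 2, f.coeff 1, f.coeff 0) ∈ L := by
  obtain ⟨z₁, z₂, z₃, hz, hprod⟩ := roots_structure hm hd
  have h1 : ‖z₁‖ ≤ 1 := hroots z₁ (by rw [hz]; simp)
  have h2 : ‖z₂‖ ≤ 1 := hroots z₂ (by rw [hz]; simp)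
  have h3 : ‖z₃‖ ≤ 1 := hroots z₃ (by rw [hz]; simp)
  rw [f_eq hm hd] at hprod
  simp only [P, Polynomial.map_add, Polynomial.map_mul, Polynomial.map_pow, Polynomial.map_X,
    Polynomial.map_C, Polynomial.map_intCast, algebraMap_int_eq, eq_intCast] at hprod
  set a := f.coeff 2 with ha'
  set b := f.coeff 1 with hb'
  set c := f.coeff 0 with hc'
  have e0 := congrArg (Polynomial.eval (0:ℂ)) hprod
  have e1 := congrArg (Polynomial.eval (1:ℂ)) hprod
  have e2 := congrArg (Polynomial.eval (-1:ℂ)) hprod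
  simp only [eval_add, eval_mul, eval_pow, eval_X, eval_one, eval_sub, eval_intCast, eval_C,
    eval_neg] at e0 e1 e2
  have hA : ((a:ℤ):ℂ) = -(z₁+z₂+z₃) := by linear_combination e1/2 + e2/2 - e0
  have hB : ((b:ℤ):ℂ) = z₁*z₂+z₁*z₃+z₂*z₃ := by linear_combination e1/2 - e2/2
  have hC : ((c:ℤ):ℂ) = -(z₁*z₂*z₃) := by linear_combination e0
  clear e0 hprod hz hroots
  have hc1 : |c| ≤ 1 := by
    have : ‖((c:ℤ):ℂ)‖ ≤ 1 := by
      rw [hC, norm_neg, norm_mul, norm_mul]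
      nlinarith [norm_nonneg z₁, norm_nonneg z₂, norm_nonneg z₃,
        mul_nonneg (norm_nonneg z₁) (norm_nonneg z₂)]
    rw [Complex.norm_intCast] at this
    exact_mod_cast this
  obtain ⟨hcl, hcu⟩ := abs_le.mp hc1
  interval_cases c
  · -- c = -1 : all roots on unit circle
    refine case_neg_one h1 h2 h3 hA hB ?_ ?_
    · have : ((-1:ℤ):ℂ) = -(z₁*z₂*z₃) := hC
      push_cast at this
      linear_combination this
    · push_cast at e2
      linear_combination e2
  · -- c = 0
    have h0 : z₁ * z₂ * z₃ = 0 := by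
      have h' : ((0:ℤ):ℂ) = -(z₁*z₂*z₃) := hC
      push_cast at h'
      linear_combination h'
    rcases mul_eq_zero.1 h0 with h00 | h00
    · rcases mul_eq_zero.1 h00 with h000 | h000
      · exact LC0 (by rw [h000] at hA; linear_combination hA)
          (by rw [h000] at hB; linear_combination hB) h2 h3
      · exact LC0 (by rw [h000] at hA; linear_combination hA)
          (by rw [h000] at hB; linear_combination hB) h1 h3
    · exact LC0 (by rw [h00] at hA; linear_combination hA)
        (by rw [h00] at hB; linear_combination hB) h1 h2
  · -- c = 1
    refine case_one h1 h2 h3 hA hB ?_ ?_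
    · have : ((1:ℤ):ℂ) = -(z₁*z₂*z₃) := hC
      push_cast at this
      linear_combination this
    · push_cast at e1
      linear_combination e1


theorem kronecker_degree_three :
    {f : Polynomial ℤ | f.Monic ∧ f.natDegree = 3 ∧
      ∀ z ∈ f.aroots ℂ, ‖z‖ ≤ 1}.ncard = 19 := by
  have hset : {f : Polynomial ℤ | f.Monic ∧ f.natDegree = 3 ∧
      ∀ z ∈ f.aroots ℂ, ‖z‖ ≤ 1} = ↑(L.image P) := by
    ext f
    simp only [Set.mem_setOf_eq, Finset.coe_image, Set.mem_image, Finset.mem_coe]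
    constructor
    · rintro ⟨hm, hd, hroots⟩
      exact ⟨_, backward hm hd hroots, (f_eq hm hd).symm⟩
    · rintro ⟨t, ht, rfl⟩
      exact ⟨P_monic t, P_deg t, forward t ht⟩
  rw [hset, Set.ncard_coe_finset, Finset.card_image_of_injective _ P_inj]
  decide
end

section
/- A monic polynomial f ∈ ℤ[x] has all its complex roots in the closed unit disc if and only if every root of f is either zero or a root of unity. -/
open Polynomial

lemma aux_exists_pow_eq_one_of_pow_eq {K : Type*} [Field K] {x : K} (hx : x ≠ 0)
    {a b : ℕ} (hab : a ≠ b) (h : x ^ a = x ^ b) : ∃ m : ℕ, 0 < m ∧ x ^ m = 1 := by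
  wlog hlt : b < a generalizing a b
  · exact this hab.symm h.symm (hab.lt_or_gt.resolve_right hlt)
  refine ⟨a - b, tsub_pos_of_lt hlt, mul_right_cancel₀ (pow_ne_zero b hx) ?_⟩
  rw [← pow_add, Nat.sub_add_cancel hlt.le, one_mul, h]

theorem kronecker_iff_roots_zero_or_unity (f : Polynomial ℤ) (hf : f.Monic) :
    (∀ z ∈ f.aroots ℂ, ‖z‖ ≤ 1) ↔
    (∀ z ∈ f.aroots ℂ, z = 0 ∨ ∃ m : ℕ, 0 < m ∧ z ^ m = 1) := by
  have hf0 : f ≠ 0 := hf.ne_zero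
  constructor
  · intro h z hz
    by_cases hz0 : z = 0
    · exact Or.inl hz0
    right
    rw [mem_aroots] at hz
    have haz : aeval z f = 0 := hz.2
    -- z is integral over ℤ
    have hzi : IsIntegral ℤ z := ⟨f, hf, haz⟩
    have hzq : IsIntegral ℚ z := hzi.tower_top
    -- the number field ℚ(z)
    let K := IntermediateField.adjoin ℚ ({z} : Set ℂ)
    haveI : FiniteDimensional ℚ K := IntermediateField.adjoin.finiteDimensional hzq
    haveI : NumberField K := ⟨⟩
    set x : K := IntermediateField.AdjoinSimple.gen ℚ z with hxdef
    have hxz : (algebraMap K ℂ) x = z := rfl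
    have hx0 : x ≠ 0 := by
      intro h0
      apply hz0
      rw [← hxz, h0, map_zero]
    have hax : aeval x f = 0 := by
      have : (algebraMap K ℂ) (aeval x f) = aeval z f := by
        rw [← hxz, aeval_algebraMap_apply]
      exact (algebraMap K ℂ).injective (by rw [this, haz, map_zero])
    have hxi : IsIntegral ℤ x := ⟨f, hf, by rw [← aeval_def]; exact hax⟩
    -- every conjugate of x has norm ≤ 1
    have hconj : ∀ φ : K →+* ℂ, ‖φ x‖ ≤ 1 := by
      intro φ
      have hroot : aeval (φ x) f = 0 := by
        have : φ (aeval x f) = eval₂ (φ.comp (algebraMap ℤ K)) (φ x) f := by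
          simp [aeval_def, hom_eval₂]
        have hcomp : φ.comp (algebraMap ℤ K) = algebraMap ℤ ℂ :=
          Subsingleton.elim _ _
        rw [hax, map_zero] at this
        rw [aeval_def, ← hcomp, ← this]
      have : φ x ∈ f.aroots ℂ := by
        rw [mem_aroots]; exact ⟨hf0, hroot⟩
      simpa using h (φ x) this
    -- powers of x land in a finite set
    have hmaps : Set.MapsTo (x ^ · : ℕ → K) Set.univ
        {y : K | IsIntegral ℤ y ∧ ∀ φ : K →+* ℂ, ‖φ y‖ ≤ 1} := by
      intro n _
      refine ⟨hxi.pow n, fun φ => ?_⟩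
      rw [map_pow, norm_pow]
      exact pow_le_one₀ (norm_nonneg _) (hconj φ)
    obtain ⟨a, -, b, -, habne, hab⟩ :=
      Set.Infinite.exists_ne_map_eq_of_mapsTo Set.infinite_univ hmaps
        (NumberField.Embeddings.finite_of_norm_le K ℂ 1)
    obtain ⟨m, hm, hxm⟩ := aux_exists_pow_eq_one_of_pow_eq hx0 habne hab
    refine ⟨m, hm, ?_⟩
    rw [← hxz, ← map_pow, hxm, map_one]
  · intro h z hz
    rcases h z hz with rfl | ⟨m, hm, hzm⟩
    · simp
    · have habs : ‖z‖ ^ m = 1 := by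
        rw [← norm_pow, hzm, norm_one]
      by_contra hlt
      push_neg at hlt
      have : (1 : ℝ) < ‖z‖ ^ m := one_lt_pow₀ hlt hm.ne'
      rw [habs] at this
      exact lt_irrefl 1 this
end

section
/- If f ∈ ℤ[x] is a monic irreducible polynomial, not equal to x, whose complex roots all lie in the closed unit disc, then f is a cyclotomic polynomial. -/
open Polynomial

lemma aux_prod_le_one_s18 (s : Multiset ℂ) (h : ∀ x ∈ s, ‖x‖ ≤ 1) :
    (s.map (‖·‖)).prod ≤ 1 := by
  induction s using Multiset.induction with
  | empty => simp
  | cons a t ih =>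
    simp only [Multiset.map_cons, Multiset.prod_cons]
    refine mul_le_one₀ (h a (Multiset.mem_cons_self a t)) ?_
      (ih fun x hx => h x (Multiset.mem_cons_of_mem hx))
    refine Multiset.prod_nonneg ?_
    simp only [Multiset.mem_map]
    rintro _ ⟨x, -, rfl⟩
    exact norm_nonneg x

theorem kronecker_irreducible_is_cyclotomic (f : Polynomial ℤ) (hf : f.Monic)
    (hirr : Irreducible f) (hne : f ≠ X)
    (hroots : ∀ z ∈ f.aroots ℂ, ‖z‖ ≤ 1) :
    ∃ n : ℕ, 0 < n ∧ f = cyclotomic n ℤ := by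
  have hf0 : f ≠ 0 := hf.ne_zero
  have hc0 : f.coeff 0 ≠ 0 := by
    intro h
    have hX : X ∣ f := X_dvd_iff.mpr h
    have : Associated (X : ℤ[X]) f := irreducible_X.associated_of_dvd hirr hX
    exact hne (eq_of_monic_of_associated hf monic_X this.symm)
  -- every root in ℂ has abs 1
  set g : ℂ[X] := f.map (algebraMap ℤ ℂ) with hg
  have hgm : g.Monic := hf.map _
  have hroots' : ∀ z ∈ g.roots, ‖z‖ ≤ 1 := hroots
  have hprod : g = (g.roots.map fun r => X - C r).prod :=
    (IsAlgClosed.splits _).eq_prod_roots_of_monic hgm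
  have he : ‖g.eval 0‖ = (g.roots.map (‖·‖)).prod := by
    conv_lhs => rw [hprod]
    rw [eval_multiset_prod, ← normHom_apply, map_multiset_prod]
    simp [Multiset.map_map]
  have h1 : 1 ≤ ‖g.eval 0‖ := by
    have h2 : g.eval 0 = ((f.coeff 0 : ℤ) : ℂ) := by
      rw [hg, eval_map, eval₂_at_zero]
      simp
    rw [h2, Complex.norm_intCast]
    exact_mod_cast Int.one_le_abs hc0
  have habs : ∀ z ∈ g.roots, ‖z‖ = 1 := by
    intro z hz
    refine le_antisymm (hroots' z hz) ?_
    obtain ⟨s, hs⟩ := Multiset.exists_cons_of_mem hz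
    rw [hs] at he
    simp only [Multiset.map_cons, Multiset.prod_cons] at he
    have hrest : (s.map (‖·‖)).prod ≤ 1 := by
      refine aux_prod_le_one_s18 s fun x hx => hroots' x ?_
      rw [hs]; exact Multiset.mem_cons_of_mem hx
    calc (1 : ℝ) ≤ ‖z‖ * (s.map (‖·‖)).prod := he ▸ h1
      _ ≤ ‖z‖ :=
        mul_le_of_le_one_right (norm_nonneg z) hrest
  -- build the number field
  have hpm : (f.map (algebraMap ℤ ℚ)).Monic := hf.map _
  have hpirr : Irreducible (f.map (algebraMap ℤ ℚ)) := by
    rw [algebraMap_int_eq]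
    exact (IsPrimitive.Int.irreducible_iff_irreducible_map_cast hf.isPrimitive).mp hirr
  haveI : Fact (Irreducible (f.map (algebraMap ℤ ℚ))) := ⟨hpirr⟩
  let K := AdjoinRoot (f.map (algebraMap ℤ ℚ))
  haveI : CharZero K := charZero_of_injective_algebraMap (algebraMap ℚ K).injective
  haveI : FiniteDimensional ℚ K := PowerBasis.finite (AdjoinRoot.powerBasis hpm.ne_zero)
  haveI : NumberField K := ⟨⟩
  let x : K := AdjoinRoot.root (f.map (algebraMap ℤ ℚ))
  have hmin : minpoly ℚ x = f.map (algebraMap ℤ ℚ) := by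
    erw [show x = AdjoinRoot.root (f.map (algebraMap ℤ ℚ)) from rfl,
      AdjoinRoot.minpoly_root hpm.ne_zero, hpm.leadingCoeff, inv_one, map_one, mul_one]
  have haevp : Polynomial.aeval x (f.map (algebraMap ℤ ℚ)) = 0 := by
    erw [show x = AdjoinRoot.root (f.map (algebraMap ℤ ℚ)) from rfl,
      AdjoinRoot.aeval_eq, AdjoinRoot.mk_self]
  have haev : Polynomial.aeval x f = 0 := by
    rwa [aeval_map_algebraMap] at haevp
  have hxint : IsIntegral ℤ x := ⟨f, hf, haev⟩
  have hnorm : ∀ φ : K →+* ℂ, ‖φ x‖ = 1 := by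
    intro φ
    have hmem : φ x ∈ (minpoly ℚ x).rootSet ℂ := by
      rw [← NumberField.Embeddings.range_eval_eq_rootSet_minpoly K ℂ x]
      exact ⟨φ, rfl⟩
    rw [hmin, mem_rootSet] at hmem
    have haev2 : Polynomial.aeval (φ x) f = 0 := by
      have h3 := hmem.2
      rwa [aeval_map_algebraMap] at h3
    have hroot : φ x ∈ g.roots := by
      rw [mem_roots (hgm.ne_zero), IsRoot, hg, eval_map, ← aeval_def]
      exact haev2
    exact habs _ hroot
  obtain ⟨n, hn, hxn⟩ := NumberField.Embeddings.pow_eq_one_of_norm_eq_one K ℂ hxint hnorm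
  have hfin : IsOfFinOrder x := isOfFinOrder_iff_pow_eq_one.mpr ⟨n, hn, hxn⟩
  have hopos : 0 < orderOf x := hfin.orderOf_pos
  have hprim : IsPrimitiveRoot x (orderOf x) := IsPrimitiveRoot.orderOf x
  refine ⟨orderOf x, hopos, ?_⟩
  have hcy : cyclotomic (orderOf x) ℚ = minpoly ℚ x := cyclotomic_eq_minpoly_rat hprim hopos
  have hmap : f.map (Int.castRingHom ℚ) = (cyclotomic (orderOf x) ℤ).map (Int.castRingHom ℚ) := by
    rw [map_cyclotomic_int, hcy, hmin, algebraMap_int_eq]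
  exact map_injective _ Int.cast_injective hmap
end

section
/- If f ∈ ℤ[x] is monic with all complex roots z_1,…,z_n in the closed unit disc, then there exist positive integers j < k such that the multiset {z_1^j,…,z_n^j} equals the multiset {z_1^k,…,z_n^k}. -/
open Polynomial IntermediateField

lemma kron_root_aux (f : Polynomial ℤ) (hf : f.Monic)
    (hroots : ∀ z ∈ f.aroots ℂ, ‖z‖ ≤ 1) {z : ℂ} (hz : z ∈ f.aroots ℂ)
    (hz0 : z ≠ 0) : ∃ n : ℕ, 0 < n ∧ z ^ n = 1 := by
  classical
  have hf0 : f ≠ 0 := hf.ne_zero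
  have hzf : aeval z f = 0 := (mem_aroots.mp hz).2
  have hzZ : IsIntegral ℤ z := ⟨f, hf, by rwa [← aeval_def]⟩
  have hzQ : IsIntegral ℚ z := hzZ.tower_top
  set K := ℚ⟮z⟯
  haveI : FiniteDimensional ℚ K := IntermediateField.adjoin.finiteDimensional hzQ
  haveI : NumberField K := ⟨⟩
  set x : K := IntermediateField.AdjoinSimple.gen ℚ z with hxdef
  have hmapx : algebraMap K ℂ x = z := IntermediateField.AdjoinSimple.algebraMap_gen ℚ z
  have hxZ : IsIntegral ℤ x := by
    rw [← isIntegral_algebraMap_iff (algebraMap K ℂ).injective, hmapx]; exact hzZ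
  -- minpoly divides f over ℚ
  have hdvd : minpoly ℚ z ∣ f.map (algebraMap ℤ ℚ) :=
    minpoly.dvd ℚ z (by rwa [aeval_map_algebraMap])
  -- every embedding sends x to something of abs ≤ 1
  have hle : ∀ φ : K →+* ℂ, ‖φ x‖ ≤ 1 := by
    intro φ
    have h1 : aeval (φ x) (minpoly ℚ x) = 0 := by
      rw [show φ x = φ.toRatAlgHom x from rfl, aeval_algHom_apply, minpoly.aeval, map_zero]
    rw [show minpoly ℚ x = minpoly ℚ z from IntermediateField.minpoly_gen ℚ z] at h1
    have h2 : aeval (φ x) f = 0 := by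
      obtain ⟨q, hq⟩ := hdvd
      have := congrArg (aeval (φ x)) hq
      rw [map_mul, h1, zero_mul, aeval_map_algebraMap] at this
      exact this
    exact hroots _ (mem_aroots.mpr ⟨hf0, h2⟩)
  -- product of abs of embeddings equals abs of norm, which is ≥ 1
  have hx0 : x ≠ 0 := by
    intro h; apply hz0; rw [← hmapx, h, map_zero]
  obtain ⟨m, hm⟩ := IsIntegrallyClosed.isIntegral_iff.mp (Algebra.isIntegral_norm ℚ hxZ)
  have hnz : Algebra.norm ℚ x ≠ 0 := by
    rw [Algebra.norm_ne_zero_iff]; exact hx0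
  have hm1 : (1 : ℝ) ≤ ‖algebraMap ℚ ℂ (Algebra.norm ℚ x)‖ := by
    rw [← hm] at hnz ⊢
    have hm0 : m ≠ 0 := by rintro rfl; simp at hnz
    have : ((1:ℤ) : ℝ) ≤ |(m:ℝ)| := by
      rw [← Int.cast_abs, Int.cast_le]
      have := abs_pos.mpr hm0; omega
    simpa [Complex.norm_intCast] using this
  have hprod : ‖algebraMap ℚ ℂ (Algebra.norm ℚ x)‖ =
      ∏ σ : K →ₐ[ℚ] ℂ, ‖σ x‖ := by
    rw [Algebra.norm_eq_prod_embeddings, norm_prod]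
  -- conclude each embedding has abs exactly 1
  have heq : ∀ φ : K →+* ℂ, ‖φ x‖ = 1 := by
    intro φ
    have hφ' : ‖φ.toRatAlgHom x‖ ≤ 1 := hle φ
    have hmem : φ.toRatAlgHom ∈ (Finset.univ : Finset (K →ₐ[ℚ] ℂ)) := Finset.mem_univ _
    have hrest : ∏ σ ∈ Finset.univ.erase φ.toRatAlgHom, ‖σ x‖ ≤ 1 :=
      Finset.prod_le_one (fun σ _ => norm_nonneg _) (fun σ _ => hle σ.toRingHom)
    have h1 : (1:ℝ) ≤ ‖φ.toRatAlgHom x‖ := by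
      have := hm1
      rw [hprod, ← Finset.mul_prod_erase _ _ hmem] at this
      calc (1:ℝ) ≤ ‖φ.toRatAlgHom x‖ *
            ∏ σ ∈ Finset.univ.erase φ.toRatAlgHom, ‖σ x‖ := this
        _ ≤ ‖φ.toRatAlgHom x‖ * 1 :=
            mul_le_mul_of_nonneg_left hrest (norm_nonneg _)
        _ = ‖φ.toRatAlgHom x‖ := mul_one _
    exact le_antisymm (hle φ) h1
  obtain ⟨n, hn, hxn⟩ := NumberField.Embeddings.pow_eq_one_of_norm_eq_one K ℂ hxZ heq
  refine ⟨n, hn, ?_⟩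
  rw [← hmapx, ← map_pow, hxn, map_one]

theorem kronecker_power_multisets_coincide (f : Polynomial ℤ) (hf : f.Monic)
    (hroots : ∀ z ∈ f.aroots ℂ, ‖z‖ ≤ 1) :
    ∃ j k : ℕ, 0 < j ∧ j < k ∧
      Multiset.map (fun z => z ^ j) (f.aroots ℂ) =
      Multiset.map (fun z => z ^ k) (f.aroots ℂ) := by
  classical
  -- for each root, pick an exponent n with z ^ n = z ^ (2 * n)
  have key : ∀ z ∈ f.aroots ℂ, ∃ n : ℕ, 0 < n ∧ z ^ n = z ^ (2 * n) := by
    intro z hz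
    by_cases hz0 : z = 0
    · exact ⟨1, one_pos, by simp [hz0]⟩
    · obtain ⟨n, hn, h1⟩ := kron_root_aux f hf hroots hz hz0
      exact ⟨n, hn, by rw [h1, two_mul, pow_add, h1, one_mul]⟩
  set S := (f.aroots ℂ).toFinset with hS
  let g : ℂ → ℕ := fun z => if h : z ∈ f.aroots ℂ then (key z h).choose else 1
  set N := ∏ z ∈ S, g z with hN
  have hgpos : ∀ z ∈ S, 0 < g z := by
    intro z hz
    simp only [g]
    split
    · exact (key z ‹_›).choose_spec.1
    · exact one_pos
  have hNpos : 0 < N := Finset.prod_pos hgpos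
  refine ⟨N, 2 * N, hNpos, by omega, ?_⟩
  apply Multiset.map_congr rfl
  intro z hz
  have hzS : z ∈ S := Multiset.mem_toFinset.mpr hz
  have hdvd : g z ∣ N := Finset.dvd_prod_of_mem g hzS
  obtain ⟨t, ht⟩ := hdvd
  have hgz : g z = (key z hz).choose := by simp only [g]; rw [dif_pos hz]
  have hzz : z ^ g z = z ^ (2 * g z) := by rw [hgz]; exact (key z hz).choose_spec.2
  calc z ^ N = (z ^ g z) ^ t := by rw [ht, pow_mul]
    _ = (z ^ (2 * g z)) ^ t := by rw [hzz]
    _ = z ^ (2 * N) := by rw [← pow_mul, ht]; ring_nf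
end
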